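/- arXiv:0910.4115 — 2 statements merged into one kernel-verified Lean document; each statement's English description precedes it below -/
import Mathlib

section
/- Let a < b be real numbers and let p > 1, q with 1/p + 1/q = 1. Let h, f : ℝ → ℝ be continuous and nonnegative on [a,b] with h positive on [a,b], and let φ, ψ : ℝ → ℝ be continuous and positive on [a,b]. Define H(y) = h(y)·ψ(y)^(−p). Then ∫_a^b H(y)·(∫_a^y φ(x)^(−q) dx)^(1−p)·(∫_a^y f(x) dx)^p dy ≤ ∫_a^b φ(x)^p·f(x)^p·(∫_x^b H(y) dy) dx, where the integrand on the left is understood with the convention 0^(1−p)·0 = 0 at y = a. (Second (Hardy-type) inequality of Corollary 3.6, continuous case 𝕋 = ℝ.) -/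
/-!
For every `y`, Hölder's inequality for `φ f` and `φ⁻¹` on `[a, y]` gives
`(∫_a^y f)^p ≤ (∫_a^y φ^p f^p) (∫_a^y φ^(-q))^(p-1)`. Multiplying by `H y ≥ 0` and integrating
over `[a, b]`, the left side is dominated by `∫_a^b H(y) ∫_a^y φ^p f^p`, and exchanging the
order of integration over the triangle `a ≤ x ≤ y ≤ b` turns this into the right side.
-/

open MeasureTheory Set intervalIntegral

theorem ContinuousOn.memLp_restrict_of_isCompact {X E : Type*} [TopologicalSpace X]
    [MeasurableSpace X] [OpensMeasurableSpace X] [NormedAddCommGroup E]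
    [SecondCountableTopologyEither X E] {μ : Measure X} [IsFiniteMeasureOnCompacts μ]
    {s : Set X} {f : X → E} (hs : IsCompact s) (hms : MeasurableSet s) (hf : ContinuousOn f s)
    (p : ENNReal) : MemLp f p (μ.restrict s) := by
  have : IsFiniteMeasure (μ.restrict s) := isFiniteMeasure_restrict.2 hs.measure_lt_top.ne
  obtain ⟨C, hC⟩ := hs.exists_bound_of_continuousOn hf
  exact .of_bound (hf.aestronglyMeasurable hms) C ((ae_restrict_iff' hms).2 (ae_of_all _ hC))

/-- No integrability of `f` is needed: if it fails, `∫ f = 0`. -/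
theorem intervalIntegral.integral_mono_on_of_nonneg {μ : Measure ℝ} {a b : ℝ} {f g : ℝ → ℝ}
    (hab : a ≤ b) (hf : ∀ x ∈ Icc a b, 0 ≤ f x) (hg : IntervalIntegrable g μ a b)
    (h : ∀ x ∈ Icc a b, f x ≤ g x) : ∫ x in a..b, f x ∂μ ≤ ∫ x in a..b, g x ∂μ := by
  rw [integral_of_le hab, integral_of_le hab]
  refine integral_mono_of_nonneg ?_ hg.1 ?_ <;> refine (ae_restrict_iff' measurableSet_Ioc).2
    (ae_of_all _ fun x hx ↦ ?_)
  exacts [hf x (Ioc_subset_Icc_self hx), h x (Ioc_subset_Icc_self hx)]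

theorem Real.HolderConjugate.rpow_one_sub_mul_rpow_le {p q A B C : ℝ}
    (hpq : p.HolderConjugate q) (hA : 0 ≤ A) (hB : 0 ≤ B) (hC : 0 < C)
    (h : A ≤ B ^ (1 / p) * C ^ (1 / q)) : C ^ (1 - p) * A ^ p ≤ B := by
  have hp : 0 < p := hpq.left_pos
  have hpq' : 1 / q * p = p - 1 := by
    field_simp [hpq.right_pos.ne']; linarith [hpq.sub_one_mul_conj]
  calc C ^ (1 - p) * A ^ p ≤ C ^ (1 - p) * (B ^ (1 / p) * C ^ (1 / q)) ^ p := by gcongr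
    _ = B * (C ^ (1 - p) * C ^ (p - 1)) := by
      rw [Real.mul_rpow (by positivity) (by positivity), ← Real.rpow_mul hB,
        ← Real.rpow_mul hC.le, one_div_mul_cancel hp.ne', Real.rpow_one, hpq']
      ring
    _ = B := by rw [← Real.rpow_add hC]; simp

/-- Hölder's inequality applied to `φ f` and `φ⁻¹`. -/
theorem intervalIntegral.integral_le_weighted_Lp_mul_Lq {p q a b : ℝ} {φ f : ℝ → ℝ}
    (hpq : p.HolderConjugate q) (hab : a ≤ b)
    (hφ : ContinuousOn φ (Icc a b)) (hφpos : ∀ x ∈ Icc a b, 0 < φ x)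
    (hf : ContinuousOn f (Icc a b)) (hfnn : ∀ x ∈ Icc a b, 0 ≤ f x) :
    ∫ x in a..b, f x ≤
      (∫ x in a..b, φ x ^ p * f x ^ p) ^ (1 / p) * (∫ x in a..b, φ x ^ (-q)) ^ (1 / q) := by
  simp only [integral_of_le hab, ← integral_Icc_eq_integral_Ioc]
  have hφinv : ContinuousOn (fun x ↦ (φ x)⁻¹) (Icc a b) := hφ.inv₀ fun x hx ↦ (hφpos x hx).ne'
  have hholder := integral_mul_le_Lp_mul_Lq_of_nonneg hpq
    ((ae_restrict_iff' measurableSet_Icc).2 (ae_of_all _ fun x hx ↦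
      mul_nonneg (hφpos x hx).le (hfnn x hx)))
    ((ae_restrict_iff' measurableSet_Icc).2 (ae_of_all _ fun x hx ↦ (inv_pos.2 (hφpos x hx)).le))
    ((hφ.mul hf).memLp_restrict_of_isCompact isCompact_Icc measurableSet_Icc _)
    (hφinv.memLp_restrict_of_isCompact (μ := volume) isCompact_Icc measurableSet_Icc _)
  calc ∫ x in Icc a b, f x = ∫ x in Icc a b, φ x * f x * (φ x)⁻¹ :=
        setIntegral_congr_fun measurableSet_Icc fun x hx ↦ by field_simp [(hφpos x hx).ne']
    _ ≤ _ := hholder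
    _ = _ := by
      congr 2 <;> refine setIntegral_congr_fun measurableSet_Icc fun x hx ↦ ?_
      · exact Real.mul_rpow (hφpos x hx).le (hfnn x hx)
      · rw [Real.inv_rpow (hφpos x hx).le, ← Real.rpow_neg (hφpos x hx).le]

theorem intervalIntegral.rpow_integral_mul_rpow_integral_le {p q a b : ℝ} {φ f : ℝ → ℝ}
    (hpq : p.HolderConjugate q) (hab : a ≤ b)
    (hφ : ContinuousOn φ (Icc a b)) (hφpos : ∀ x ∈ Icc a b, 0 < φ x)
    (hf : ContinuousOn f (Icc a b)) (hfnn : ∀ x ∈ Icc a b, 0 ≤ f x) :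
    (∫ x in a..b, φ x ^ (-q)) ^ (1 - p) * (∫ x in a..b, f x) ^ p ≤
      ∫ x in a..b, φ x ^ p * f x ^ p := by
  rcases hab.eq_or_lt with rfl | hab
  · simp [Real.zero_rpow hpq.left_pos.ne']
  refine hpq.rpow_one_sub_mul_rpow_le (integral_nonneg hab.le hfnn)
    (integral_nonneg hab.le fun x hx ↦ by have := hφpos x hx; have := hfnn x hx; positivity)
    (intervalIntegral_pos_of_pos_on ?_ (fun x hx ↦ Real.rpow_pos_of_pos
      (hφpos x (Ioo_subset_Icc_self hx)) _) hab)
    (integral_le_weighted_Lp_mul_Lq hpq hab.le hφ hφpos hf hfnn)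
  exact (hφ.rpow_const fun x hx ↦ .inl (hφpos x hx).ne').intervalIntegrable_of_Icc hab.le

theorem ContinuousOn.hasDerivAt_integral_right {f : ℝ → ℝ} {a b c x : ℝ}
    (hf : ContinuousOn f (Icc a b)) (hc : c ∈ Icc a b) (hx : x ∈ Ioo a b) :
    HasDerivAt (fun u ↦ ∫ t in c..u, f t) (f x) x :=
  integral_hasDerivAt_right
    (hf.mono (uIcc_subset_Icc hc (Ioo_subset_Icc_self hx))).intervalIntegrable
    ((hf.mono Ioo_subset_Icc_self).stronglyMeasurableAtFilter isOpen_Ioo x hx)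
    (hf.continuousAt (Icc_mem_nhds hx.1 hx.2))

theorem ContinuousOn.hasDerivAt_integral_left {f : ℝ → ℝ} {a b c x : ℝ}
    (hf : ContinuousOn f (Icc a b)) (hc : c ∈ Icc a b) (hx : x ∈ Ioo a b) :
    HasDerivAt (fun u ↦ ∫ t in u..c, f t) (-f x) x :=
  integral_hasDerivAt_left
    (hf.mono (uIcc_subset_Icc (Ioo_subset_Icc_self hx) hc)).intervalIntegrable
    ((hf.mono Ioo_subset_Icc_self).stronglyMeasurableAtFilter isOpen_Ioo x hx)
    (hf.continuousAt (Icc_mem_nhds hx.1 hx.2))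

/-- Fubini on the triangle `a ≤ x ≤ y ≤ b`, proved by integration by parts. -/
theorem intervalIntegral.integral_mul_integral_eq_integral_mul_integral {a b : ℝ} {H g : ℝ → ℝ}
    (hab : a ≤ b) (hH : ContinuousOn H (Icc a b)) (hg : ContinuousOn g (Icc a b)) :
    ∫ y in a..b, H y * ∫ x in a..y, g x = ∫ x in a..b, g x * ∫ y in x..b, H y := by
  have hIcc : uIcc a b = Icc a b := uIcc_of_le hab
  have hmin : Ioo (min a b) (max a b) = Ioo a b := by rw [min_eq_left hab, max_eq_right hab]
  have hibp := integral_mul_deriv_eq_deriv_mul_of_hasDerivAt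
    (u := fun y ↦ ∫ x in a..y, g x) (v := fun x ↦ ∫ y in x..b, H y)
    (continuousOn_primitive_interval (by rw [hIcc]; exact hg.integrableOn_Icc))
    (continuousOn_primitive_interval_left (by rw [hIcc]; exact hH.integrableOn_Icc))
    (fun x hx ↦ hg.hasDerivAt_integral_right (left_mem_Icc.2 hab) (hmin ▸ hx))
    (fun x hx ↦ hH.hasDerivAt_integral_left (right_mem_Icc.2 hab) (hmin ▸ hx))
    (hg.intervalIntegrable_of_Icc hab) (hH.intervalIntegrable_of_Icc hab).neg
  simp only [integral_same, mul_zero, zero_mul, sub_zero, zero_sub, mul_neg, integral_neg,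
    neg_inj] at hibp
  rw [← hibp]
  exact integral_congr fun y _ ↦ mul_comm _ _

/-- Second (Hardy-type) inequality of Corollary 3.6, continuous case 𝕋 = ℝ. -/
theorem corollary36_second_inequality_continuous
    (a b p q : ℝ) (h f φ ψ : ℝ → ℝ)
    (hab : a < b) (hp : 1 < p) (hpq : 1 / p + 1 / q = 1)
    (hh : ContinuousOn h (Set.Icc a b)) (hhpos : ∀ t ∈ Set.Icc a b, 0 < h t)
    (hf : ContinuousOn f (Set.Icc a b)) (hfnn : ∀ t ∈ Set.Icc a b, 0 ≤ f t)
    (hφ : ContinuousOn φ (Set.Icc a b)) (hφpos : ∀ t ∈ Set.Icc a b, 0 < φ t)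
    (hψ : ContinuousOn ψ (Set.Icc a b)) (hψpos : ∀ t ∈ Set.Icc a b, 0 < ψ t)
    (H : ℝ → ℝ) (hH : ∀ y, H y = h y * ψ y ^ (-p)) :
    (∫ y in a..b, H y * (∫ x in a..y, φ x ^ (-q)) ^ (1 - p) * (∫ x in a..y, f x) ^ p)
      ≤ ∫ x in a..b, φ x ^ p * f x ^ p * ∫ y in x..b, H y := by
  have hpq : p.HolderConjugate q :=
    Real.holderConjugate_iff.2 ⟨hp, by simpa only [one_div] using hpq⟩
  have hHcont : ContinuousOn H (Icc a b) :=
    (hh.mul (hψ.rpow_const fun y hy ↦ .inl (hψpos y hy).ne')).congr fun y _ ↦ hH y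
  have hHnn : ∀ y ∈ Icc a b, 0 ≤ H y := fun y hy ↦ by
    have := hhpos y hy; have := hψpos y hy; rw [hH]; positivity
  have hg : ContinuousOn (fun x ↦ φ x ^ p * f x ^ p) (Icc a b) :=
    (hφ.rpow_const fun _ _ ↦ .inr hpq.left_pos.le).mul
      (hf.rpow_const fun _ _ ↦ .inr hpq.left_pos.le)
  have hG : ContinuousOn (fun y ↦ ∫ x in a..y, φ x ^ p * f x ^ p) (Icc a b) := by
    simpa only [uIcc_of_le hab.le] using
      continuousOn_primitive_interval' (hg.intervalIntegrable_of_Icc hab.le) left_mem_uIcc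
  have hsub {y} (hy : y ∈ Icc a b) : Icc a y ⊆ Icc a b := Icc_subset_Icc_right hy.2
  calc _ ≤ ∫ y in a..b, H y * ∫ x in a..y, φ x ^ p * f x ^ p := by
        refine integral_mono_on_of_nonneg hab.le (fun y hy ↦ ?_)
          ((hHcont.mul hG).intervalIntegrable_of_Icc hab.le) fun y hy ↦ ?_
        · have hC : 0 ≤ ∫ x in a..y, φ x ^ (-q) := integral_nonneg hy.1 fun x hx ↦
            (Real.rpow_pos_of_pos (hφpos x (hsub hy hx)) _).le
          have hA : 0 ≤ ∫ x in a..y, f x := integral_nonneg hy.1 fun x hx ↦ hfnn x (hsub hy hx)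
          exact mul_nonneg (mul_nonneg (hHnn y hy) (Real.rpow_nonneg hC _)) (Real.rpow_nonneg hA _)
        · rw [mul_assoc]
          exact mul_le_mul_of_nonneg_left (rpow_integral_mul_rpow_integral_le hpq hy.1
            (hφ.mono (hsub hy)) (fun x hx ↦ hφpos x (hsub hy hx)) (hf.mono (hsub hy))
            fun x hx ↦ hfnn x (hsub hy hx)) (hHnn y hy)
    _ = _ := integral_mul_integral_eq_integral_mul_integral hab.le hHcont hg
end

section
/- Let a < b be real numbers and let p > 1, q with 1/p + 1/q = 1. Let h, f, g : ℝ → ℝ be continuous and nonnegative on [a,b] and let φ, ψ : ℝ → ℝ be continuous and positive on [a,b]. Define H(y) = h(y)·ψ(y)^(−p). Then ∫_a^b ( ∫_y^b h(y)·f(x)·g(y) dx ) dy ≤ (∫_a^b φ(x)^p·f(x)^p·(∫_a^x H(y) dy) dx)^(1/p) · (∫_a^b ψ(y)^q·g(y)^q·h(y)·(∫_y^b φ(x)^(−q) dx) dy)^(1/q). (First inequality of Corollary 3.7, continuous case 𝕋 = ℝ, obtained from Theorem 3.4 with the kernel K(x,y) = h(y) for x > y, K(x,y) = 0 for x ≤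 y.) -/
/-!
Write the left side as an integral over the triangle `a < y < x ≤ b` and apply Hölder's
inequality to the factorization
`h(y) f(x) g(y) = (φ(x) f(x) h(y)^(1/p) / ψ(y)) · (ψ(y) g(y) h(y)^(1/q) / φ(x))`.
Fubini's theorem, integrating in `y` first for the `p`-th power and in `x` first for the
`q`-th power, turns the two Hölder integrals into the iterated integrals on the right.
-/

open MeasureTheory Set

theorem ContinuousOn.comp_fst_prod {α β γ : Type*} [TopologicalSpace α] [TopologicalSpace β]
    [TopologicalSpace γ] {u : α → γ} {s : Set α} (hu : ContinuousOn u s) (t : Set β) :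
    ContinuousOn (fun z : α × β => u z.1) (s ×ˢ t) :=
  hu.comp continuous_fst.continuousOn fun _ hz => hz.1

theorem ContinuousOn.comp_snd_prod {α β γ : Type*} [TopologicalSpace α] [TopologicalSpace β]
    [TopologicalSpace γ] {u : β → γ} {t : Set β} (hu : ContinuousOn u t) (s : Set α) :
    ContinuousOn (fun z : α × β => u z.2) (s ×ˢ t) :=
  hu.comp continuous_snd.continuousOn fun _ hz => hz.2

namespace Real

variable {p q a b c d : ℝ}

theorem rpow_one_div_mul_rpow_one_div_of_holderConjugate (hpq : p.HolderConjugate q)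
    (hc : 0 ≤ c) : c ^ (1 / p) * c ^ (1 / q) = c := by
  rw [← rpow_add' hc (by simp [hpq.inv_add_inv_eq_one]), one_div, one_div,
    hpq.inv_add_inv_eq_one, rpow_one]

theorem mul_mul_rpow_one_div_div_rpow (hp : p ≠ 0) (ha : 0 ≤ a) (hb : 0 ≤ b) (hc : 0 ≤ c)
    (hd : 0 < d) : (a * b * c ^ (1 / p) / d) ^ p = a ^ p * b ^ p * (c * d ^ (-p)) := by
  rw [div_rpow (by positivity) hd.le, mul_rpow (by positivity) (by positivity), mul_rpow ha hb,
    ← rpow_mul hc, one_div_mul_cancel hp, rpow_one, rpow_neg hd.le, div_eq_mul_inv, mul_assoc]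

end Real

section Holder

variable {X : Type*} [TopologicalSpace X] [MeasurableSpace X] [OpensMeasurableSpace X]
  {μ : Measure X} {K s : Set X}

theorem ContinuousOn.memLp_restrict_of_subset_isCompact {E : Type*} [NormedAddCommGroup E]
    {f : X → E} (hf : ContinuousOn f K) (hK : IsCompact K) (hs : MeasurableSet s) (hsK : s ⊆ K)
    (hμs : μ s ≠ ⊤) (r : ENNReal) : MemLp f r (μ.restrict s) := by
  have := isFiniteMeasure_restrict.2 hμs
  obtain ⟨C, hC⟩ := hK.exists_bound_of_continuousOn hf
  exact .of_bound (hf.aestronglyMeasurable_of_subset_isCompact hK hs hsK) C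
    (by filter_upwards [ae_restrict_mem hs] with z hz using hC z (hsK hz))

theorem setIntegral_mul_mul_le_of_continuousOn [IsFiniteMeasureOnCompacts μ] {p q : ℝ}
    (hpq : p.HolderConjugate q) (hK : IsCompact K) (hs : MeasurableSet s) (hsK : s ⊆ K)
    {k f g φ ψ : X → ℝ} (hk : ContinuousOn k K) (hf : ContinuousOn f K)
    (hg : ContinuousOn g K) (hφ : ContinuousOn φ K) (hψ : ContinuousOn ψ K)
    (hk0 : ∀ z ∈ s, 0 ≤ k z) (hf0 : ∀ z ∈ s, 0 ≤ f z) (hg0 : ∀ z ∈ s, 0 ≤ g z)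
    (hφ0 : ∀ z ∈ K, 0 < φ z) (hψ0 : ∀ z ∈ K, 0 < ψ z) :
    ∫ z in s, k z * f z * g z ∂μ ≤
      (∫ z in s, φ z ^ p * f z ^ p * (k z * ψ z ^ (-p)) ∂μ) ^ (1 / p) *
        (∫ z in s, ψ z ^ q * g z ^ q * (k z * φ z ^ (-q)) ∂μ) ^ (1 / q) := by
  set u : X → ℝ := fun z => φ z * f z * k z ^ (1 / p) / ψ z
  set v : X → ℝ := fun z => ψ z * g z * k z ^ (1 / q) / φ z
  have hu : ContinuousOn u K := (hφ.mul hf |>.mul <| hk.rpow_const fun _ _ =>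
    .inr (one_div_nonneg.2 hpq.nonneg)).div hψ fun z hz => (hψ0 z hz).ne'
  have hv : ContinuousOn v K := (hψ.mul hg |>.mul <| hk.rpow_const fun _ _ =>
    .inr (one_div_nonneg.2 hpq.symm.nonneg)).div hφ fun z hz => (hφ0 z hz).ne'
  have hu0 : ∀ z ∈ s, 0 ≤ u z := fun z hz => div_nonneg (mul_nonneg (mul_nonneg
    (hφ0 z (hsK hz)).le (hf0 z hz)) (Real.rpow_nonneg (hk0 z hz) _)) (hψ0 z (hsK hz)).le
  have hv0 : ∀ z ∈ s, 0 ≤ v z := fun z hz => div_nonneg (mul_nonneg (mul_nonneg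
    (hψ0 z (hsK hz)).le (hg0 z hz)) (Real.rpow_nonneg (hk0 z hz) _)) (hφ0 z (hsK hz)).le
  have huv : ∀ z ∈ s, u z * v z = k z * f z * g z := fun z hz => by
    have hkk := Real.rpow_one_div_mul_rpow_one_div_of_holderConjugate hpq (hk0 z hz)
    calc u z * v z = f z * g z * (k z ^ (1 / p) * k z ^ (1 / q)) := by
          simp only [u, v]
          field_simp [(hφ0 z (hsK hz)).ne', (hψ0 z (hsK hz)).ne']
      _ = k z * f z * g z := by rw [hkk]; ring
  have hup : ∀ z ∈ s, u z ^ p = φ z ^ p * f z ^ p * (k z * ψ z ^ (-p)) := fun z hz =>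
    Real.mul_mul_rpow_one_div_div_rpow hpq.ne_zero (hφ0 z (hsK hz)).le (hf0 z hz) (hk0 z hz)
      (hψ0 z (hsK hz))
  have hvq : ∀ z ∈ s, v z ^ q = ψ z ^ q * g z ^ q * (k z * φ z ^ (-q)) := fun z hz =>
    Real.mul_mul_rpow_one_div_div_rpow hpq.symm.ne_zero (hψ0 z (hsK hz)).le (hg0 z hz)
      (hk0 z hz) (hφ0 z (hsK hz))
  have hμs : μ s ≠ ⊤ := ((measure_mono hsK).trans_lt hK.measure_lt_top).ne
  rw [← setIntegral_congr_fun hs huv, ← setIntegral_congr_fun hs hup,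
    ← setIntegral_congr_fun hs hvq]
  exact integral_mul_le_Lp_mul_Lq_of_nonneg hpq (ae_restrict_of_forall_mem hs hu0)
    (ae_restrict_of_forall_mem hs hv0) (hu.memLp_restrict_of_subset_isCompact hK hs hsK hμs _)
    (hv.memLp_restrict_of_subset_isCompact hK hs hsK hμs _)

end Holder

section Sections

variable {α β E : Type*} [MeasurableSpace α] [MeasurableSpace β]
  [NormedAddCommGroup E] [NormedSpace ℝ E]
  {μ : Measure α} {ν : Measure β} [SFinite μ] [SFinite ν] {s : Set (α × β)}
  {k : α × β → E}

theorem setIntegral_prod_eq_integral_setIntegral_prodMk_preimage (hs : MeasurableSet s)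
    (hk : IntegrableOn k s (μ.prod ν)) :
    ∫ z in s, k z ∂μ.prod ν = ∫ x, ∫ y in Prod.mk x ⁻¹' s, k (x, y) ∂ν ∂μ := by
  rw [← integral_indicator hs, integral_prod _ ((integrable_indicator_iff hs).2 hk)]
  congr 1 with x
  rw [← integral_indicator (measurable_prodMk_left hs)]
  rfl

theorem setIntegral_prod_eq_integral_setIntegral_prodMk_preimage_symm
    (hs : MeasurableSet s) (hk : IntegrableOn k s (μ.prod ν)) :
    ∫ z in s, k z ∂μ.prod ν = ∫ y, ∫ x in (·, y) ⁻¹' s, k (x, y) ∂μ ∂ν := by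
  rw [← integral_indicator hs, integral_prod_symm _ ((integrable_indicator_iff hs).2 hk)]
  congr 1 with y
  rw [← integral_indicator (measurable_prodMk_right hs)]
  rfl

end Sections

section Triangle

-- `z = (y, x)`: the first coordinate is the outer variable of the left-hand side.
def triangle (a b : ℝ) : Set (ℝ × ℝ) := {z | a < z.1 ∧ z.1 < z.2 ∧ z.2 ≤ b}

theorem measurableSet_triangle (a b : ℝ) : MeasurableSet (triangle a b) :=
  (measurableSet_lt measurable_const measurable_fst).inter
    ((measurableSet_lt measurable_fst measurable_snd).inter
      (measurableSet_le measurable_snd measurable_const))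

theorem triangle_subset_Icc_prod_Icc (a b : ℝ) : triangle a b ⊆ Icc a b ×ˢ Icc a b :=
  fun _ ⟨hay, hyx, hxb⟩ => ⟨⟨hay.le, (hyx.trans_le hxb).le⟩, ⟨(hay.trans hyx).le, hxb⟩⟩

variable {a b : ℝ} {k : ℝ × ℝ → ℝ}

theorem setIntegral_triangle (hab : a ≤ b) (hk : IntegrableOn k (triangle a b)) :
    ∫ z in triangle a b, k z = ∫ y in a..b, ∫ x in y..b, k (y, x) := by
  rw [Measure.volume_eq_prod] at hk ⊢
  rw [setIntegral_prod_eq_integral_setIntegral_prodMk_preimage (measurableSet_triangle a b) hk,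
    intervalIntegral.integral_of_le hab, ← integral_indicator measurableSet_Ioc]
  congr 1 with y
  by_cases hy : y ∈ Ioc a b
  · have : Prod.mk y ⁻¹' triangle a b = Ioc y b := by ext x; simp [triangle, hy.1]
    rw [indicator_of_mem hy, this, intervalIntegral.integral_of_le hy.2]
  · have : Prod.mk y ⁻¹' triangle a b = ∅ :=
      eq_empty_of_forall_notMem fun x hx => hy ⟨hx.1, (hx.2.1.trans_le hx.2.2).le⟩
    rw [indicator_of_notMem hy, this, Measure.restrict_empty, integral_zero_measure]

theorem setIntegral_triangle_symm (hab : a ≤ b) (hk : IntegrableOn k (triangle a b)) :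
    ∫ z in triangle a b, k z = ∫ x in a..b, ∫ y in a..x, k (y, x) := by
  rw [Measure.volume_eq_prod] at hk ⊢
  rw [setIntegral_prod_eq_integral_setIntegral_prodMk_preimage_symm
      (measurableSet_triangle a b) hk,
    intervalIntegral.integral_of_le hab, ← integral_indicator measurableSet_Ioc]
  congr 1 with x
  by_cases hx : x ∈ Ioc a b
  · have : (·, x) ⁻¹' triangle a b = Ioo a x := by ext y; simp [triangle, hx.2]
    rw [indicator_of_mem hx, this, intervalIntegral.integral_of_le hx.1.le,
      integral_Ioc_eq_integral_Ioo]
  · have : (·, x) ⁻¹' triangle a b = ∅ :=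
      eq_empty_of_forall_notMem fun y hy => hx ⟨hy.1.trans hy.2.1, hy.2.2⟩
    rw [indicator_of_notMem hx, this, Measure.restrict_empty, integral_zero_measure]

theorem ContinuousOn.integrableOn_triangle (hk : ContinuousOn k (Icc a b ×ˢ Icc a b)) :
    IntegrableOn k (triangle a b) :=
  (hk.integrableOn_compact (isCompact_Icc.prod isCompact_Icc)).mono_set
    (triangle_subset_Icc_prod_Icc a b)

end Triangle

/-- First inequality of Corollary 3.7, continuous case 𝕋 = ℝ. -/
theorem corollary37_first_inequality_continuous
    (a b p q : ℝ) (h f g φ ψ : ℝ → ℝ)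
    (hab : a < b) (hp : 1 < p) (hpq : 1 / p + 1 / q = 1)
    (hh : ContinuousOn h (Set.Icc a b)) (hhnn : ∀ t ∈ Set.Icc a b, 0 ≤ h t)
    (hf : ContinuousOn f (Set.Icc a b)) (hfnn : ∀ t ∈ Set.Icc a b, 0 ≤ f t)
    (hg : ContinuousOn g (Set.Icc a b)) (hgnn : ∀ t ∈ Set.Icc a b, 0 ≤ g t)
    (hφ : ContinuousOn φ (Set.Icc a b)) (hφpos : ∀ t ∈ Set.Icc a b, 0 < φ t)
    (hψ : ContinuousOn ψ (Set.Icc a b)) (hψpos : ∀ t ∈ Set.Icc a b, 0 < ψ t)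
    (H : ℝ → ℝ) (hH : ∀ y, H y = h y * ψ y ^ (-p)) :
    (∫ y in a..b, ∫ x in y..b, h y * f x * g y)
      ≤ (∫ x in a..b, φ x ^ p * f x ^ p * ∫ y in a..x, H y) ^ (1 / p) *
        (∫ y in a..b, ψ y ^ q * g y ^ q * h y * ∫ x in y..b, φ x ^ (-q)) ^ (1 / q) := by
  have hpq : p.HolderConjugate q :=
    Real.holderConjugate_iff.2 ⟨hp, by simpa [one_div] using hpq⟩
  have hT := triangle_subset_Icc_prod_Icc a b
  have holder := setIntegral_mul_mul_le_of_continuousOn (μ := volume) hpq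
    (isCompact_Icc.prod isCompact_Icc) (measurableSet_triangle a b) hT
    (hh.comp_fst_prod _) (hf.comp_snd_prod _) (hg.comp_fst_prod _) (hφ.comp_snd_prod _)
    (hψ.comp_fst_prod _) (fun z hz => hhnn _ (hT hz).1) (fun z hz => hfnn _ (hT hz).2)
    (fun z hz => hgnn _ (hT hz).1) (fun z hz => hφpos _ hz.2) (fun z hz => hψpos _ hz.1)
  have hφr {r : ℝ} : ContinuousOn (φ · ^ r) (Icc a b) :=
    hφ.rpow_const fun t ht => .inl (hφpos t ht).ne'
  have hψr {r : ℝ} : ContinuousOn (ψ · ^ r) (Icc a b) :=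
    hψ.rpow_const fun t ht => .inl (hψpos t ht).ne'
  calc (∫ y in a..b, ∫ x in y..b, h y * f x * g y)
      = ∫ z in triangle a b, h z.1 * f z.2 * g z.1 :=
        (setIntegral_triangle hab.le <| ContinuousOn.integrableOn_triangle <|
          (hh.comp_fst_prod _).fun_mul (hf.comp_snd_prod _) |>.fun_mul (hg.comp_fst_prod _)).symm
    _ ≤ _ := holder
    _ = _ := by
        rw [setIntegral_triangle_symm hab.le <| ContinuousOn.integrableOn_triangle <|
            (hφr.comp_snd_prod _).fun_mul
              ((hf.rpow_const fun _ _ => .inr hpq.nonneg).comp_snd_prod _)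
              |>.fun_mul ((hh.fun_mul hψr).comp_fst_prod _),
          setIntegral_triangle hab.le <| ContinuousOn.integrableOn_triangle <|
            ((hψr.comp_fst_prod _).fun_mul
              ((hg.rpow_const fun _ _ => .inr hpq.symm.nonneg).comp_fst_prod _))
              |>.fun_mul ((hh.comp_fst_prod _).fun_mul (hφr.comp_snd_prod _))]
        simp_rw [hH, intervalIntegral.integral_const_mul, mul_assoc]
end
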